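/- arXiv:1606.08023 — 11 statements merged into one kernel-verified Lean document; each statement's English description precedes it below -/
import Mathlib

section
/- For every β ∈ (0, γ], one has 0 < α_β ≤ min(π, 2π − β). -/
/-- For every `β ∈ (0, γ]`, one has `0 < α_β ≤ min(π, 2π − β)`. -/
theorem stmt_6 (γ β αβ : ℝ) (hγ : γ - Real.sin (γ / 2) = Real.pi)
    (hβ : β ∈ Set.Ioc 0 γ)
    (hαβ : αβ + 2 * Real.sin (αβ / 2) = β) :
    0 < αβ ∧ αβ ≤ min Real.pi (2 * Real.pi - β) := by
  obtain ⟨hβ0, hβγ⟩ := hβ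
  have hsγ : Real.sin (γ / 2) = γ - Real.pi := by linarith
  have hπ : (1:ℝ) < Real.pi := by linarith [Real.pi_gt_three]
  have hγle : γ ≤ Real.pi + 1 := by have := Real.sin_le_one (γ/2); linarith
  have hγge : Real.pi - 1 ≤ γ := by have := Real.neg_one_le_sin (γ/2); linarith
  have hγgt : Real.pi < γ := by
    have hpos : 0 < Real.sin (γ/2) :=
      Real.sin_pos_of_pos_of_lt_pi (by linarith) (by linarith)
    linarith [hsγ ▸ hpos]
  -- positivity
  have h1 : 0 < αβ := by
    by_contra h
    push_neg at h
    rcases le_or_gt (-2) αβ with hc | hc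
    · have : Real.sin (αβ/2) ≤ 0 :=
        Real.sin_nonpos_of_nonpos_of_neg_pi_le (by linarith) (by linarith)
      linarith
    · have := Real.sin_le_one (αβ/2); linarith
  -- αβ ≤ π
  have h2 : αβ ≤ Real.pi := by
    by_contra h
    push_neg at h
    have hderiv : ∀ ε : ℝ, HasDerivAt (fun x : ℝ => x + 2 * Real.cos (x/2))
        (1 - Real.sin (ε/2)) ε := by
      intro ε
      have hd1 : HasDerivAt (fun x : ℝ => x/2) (1/2) ε := (hasDerivAt_id ε).div_const 2
      have hd2 : HasDerivAt (fun x : ℝ => Real.cos (x/2)) (-Real.sin (ε/2) * (1/2)) ε :=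
        by have := (Real.hasDerivAt_cos (ε/2)).comp ε hd1; exact this
      have := (hasDerivAt_id ε).add (hd2.const_mul 2)
      exact this.congr_deriv (by ring)
    have hmono : MonotoneOn (fun x : ℝ => x + 2 * Real.cos (x/2)) (Set.Ici 0) := by
      apply monotoneOn_of_deriv_nonneg (convex_Ici 0)
      · exact (continuous_id.add (continuous_const.mul (Real.continuous_cos.comp (continuous_id.div_const 2)))).continuousOn
      · intro x hx
        exact (hderiv x).differentiableAt.differentiableWithinAt
      · intro x hx
        rw [(hderiv x).deriv]
        have := Real.sin_le_one (x/2); linarith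
    have key := hmono (Set.self_mem_Ici) (show (αβ - Real.pi) ∈ Set.Ici (0:ℝ) by
      simp; linarith) (by linarith)
    norm_num at key
    have hcs : Real.cos ((αβ - Real.pi)/2) = Real.sin (αβ/2) := by
      have he : (αβ - Real.pi)/2 = -(Real.pi/2 - αβ/2) := by ring
      rw [he, Real.cos_neg, Real.cos_pi_div_two_sub]
    rw [hcs] at key
    linarith
  -- strict monotonicity of F on [0, π]
  have hF : StrictMonoOn (fun x : ℝ => x + 2 * Real.sin (x/2)) (Set.Icc 0 Real.pi) := by
    apply strictMonoOn_of_deriv_pos (convex_Icc 0 Real.pi)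
    · exact (continuous_id.add (continuous_const.mul (Real.continuous_sin.comp (continuous_id.div_const 2)))).continuousOn
    · intro x hx
      rw [interior_Icc] at hx
      have hd1 : HasDerivAt (fun y : ℝ => y/2) (1/2) x := (hasDerivAt_id x).div_const 2
      have hd2 : HasDerivAt (fun y : ℝ => Real.sin (y/2)) (Real.cos (x/2) * (1/2)) x :=
        by have := (Real.hasDerivAt_sin (x/2)).comp x hd1; exact this
      have hd : HasDerivAt (fun y : ℝ => y + 2 * Real.sin (y/2)) (1 + Real.cos (x/2)) x := by
        have := (hasDerivAt_id x).add (hd2.const_mul 2)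
        exact this.congr_deriv (by ring)
      rw [hd.deriv]
      have hcpos : 0 < Real.cos (x/2) :=
        Real.cos_pos_of_mem_Ioo ⟨by linarith [hx.1, Real.pi_pos], by linarith [hx.2]⟩
      linarith
  -- F(2π - γ) = γ
  have hFg : (2*Real.pi - γ) + 2 * Real.sin ((2*Real.pi - γ)/2) = γ := by
    have he : (2*Real.pi - γ)/2 = Real.pi - γ/2 := by ring
    rw [he, Real.sin_pi_sub, hsγ]; ring
  have hmem1 : (2*Real.pi - γ) ∈ Set.Icc (0:ℝ) Real.pi := ⟨by linarith, by linarith⟩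
  have hmem2 : αβ ∈ Set.Icc (0:ℝ) Real.pi := ⟨le_of_lt h1, h2⟩
  have h3 : αβ ≤ 2*Real.pi - γ := by
    by_contra h
    push_neg at h
    have := hF hmem1 hmem2 h
    simp only at this
    linarith
  -- sin bound
  have hs2 : Real.sin ((2*Real.pi - γ)/2) = γ - Real.pi := by
    have he : (2*Real.pi - γ)/2 = Real.pi - γ/2 := by ring
    rw [he, Real.sin_pi_sub, hsγ]
  have hfin : Real.sin (αβ/2) ≤ γ - Real.pi := by
    rw [← hs2]
    apply Real.strictMonoOn_sin.monotoneOn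
    · constructor <;> [linarith [Real.pi_pos]; linarith]
    · constructor <;> [linarith [Real.pi_pos]; linarith]
    · linarith
  refine ⟨h1, le_min h2 ?_⟩
  linarith
end

section
/- Let β ∈ (0, γ]. Then for every α with 0 < α ≤ min(π, 2π − β), one has max(c¹₁(α_β), c¹₂(α_β)) ≤ max(c¹₁(α), c¹₂(α)), and moreover max(c¹₁(α_β), c¹₂(α_β)) = 1 + 2π − α_β + 2·sin(α_β/2). (Hence the optimal 1-Jump Algorithm for β ≤ γ chooses jump α_β and terminates in time 1 + 2π − α_β + 2·sin(α_β/2).) -/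
private lemma hasDeriv_f (x : ℝ) :
    HasDerivAt (fun x : ℝ => x + 2 * Real.sin (x / 2)) (1 + Real.cos (x / 2)) x := by
  have h1 : HasDerivAt (fun x : ℝ => x / 2) (1 / 2) x := (hasDerivAt_id x).div_const 2
  have h2 := (Real.hasDerivAt_sin (x / 2)).comp x h1
  have h3 := (hasDerivAt_id x).add (h2.const_mul 2)
  convert h3 using 1
  · rfl
  · rfl
  · funext y; simp [Function.comp]
  · ring

private lemma hasDeriv_g (x : ℝ) :
    HasDerivAt (fun x : ℝ => x - 2 * Real.sin (x / 2)) (1 - Real.cos (x / 2)) x := by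
  have h1 : HasDerivAt (fun x : ℝ => x / 2) (1 / 2) x := (hasDerivAt_id x).div_const 2
  have h2 := (Real.hasDerivAt_sin (x / 2)).comp x h1
  have h3 := (hasDerivAt_id x).sub (h2.const_mul 2)
  convert h3 using 1
  · rfl
  · rfl
  · funext y; simp [Function.comp]
  · ring

private lemma mono_f : Monotone (fun x : ℝ => x + 2 * Real.sin (x / 2)) := by
  apply monotone_of_deriv_nonneg
  · exact fun x => (hasDeriv_f x).differentiableAt
  · intro x
    rw [(hasDeriv_f x).deriv]
    nlinarith [Real.neg_one_le_cos (x / 2)]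

private lemma mono_g : Monotone (fun x : ℝ => x - 2 * Real.sin (x / 2)) := by
  apply monotone_of_deriv_nonneg
  · exact fun x => (hasDeriv_g x).differentiableAt
  · intro x
    rw [(hasDeriv_g x).deriv]
    nlinarith [Real.cos_le_one (x / 2)]

/-- For `β ∈ (0, γ]`, the jump `α_β` minimizes `max(c¹₁(α), c¹₂(α))` over all
valid jumps `α`, and the optimal value is `1 + 2π − α_β + 2 sin(α_β/2)`. -/
theorem stmt_7 (γ β αβ : ℝ) (hγ : γ - Real.sin (γ / 2) = Real.pi)
    (hβ : β ∈ Set.Ioc 0 γ)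
    (hαβ : αβ + 2 * Real.sin (αβ / 2) = β) :
    (∀ α : ℝ, 0 < α → α ≤ min Real.pi (2 * Real.pi - β) →
      max (1 + 2 * Real.pi - β + 4 * Real.sin (αβ / 2))
          (1 + 2 * Real.pi - αβ + 2 * Real.sin (αβ / 2)) ≤
      max (1 + 2 * Real.pi - β + 4 * Real.sin (α / 2))
          (1 + 2 * Real.pi - α + 2 * Real.sin (α / 2))) ∧
    max (1 + 2 * Real.pi - β + 4 * Real.sin (αβ / 2))
        (1 + 2 * Real.pi - αβ + 2 * Real.sin (αβ / 2)) =
      1 + 2 * Real.pi - αβ + 2 * Real.sin (αβ / 2) := by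
  obtain ⟨hβ0, hβγ⟩ := hβ
  have hπpos := Real.pi_pos
  -- γ ≤ π + 1
  have hγle : γ ≤ Real.pi + 1 := by
    nlinarith [Real.sin_le_one (γ / 2)]
  -- αβ > 0
  have hαβpos : 0 < αβ := by
    by_contra h
    push_neg at h
    have := mono_f h
    simp only at this
    simp at this
    nlinarith
  -- αβ ≤ π
  have hαβπ : αβ ≤ Real.pi := by
    by_contra h
    push_neg at h
    have := mono_f h.le
    simp only [Real.sin_pi_div_two] at this
    nlinarith
  -- the two costs at αβ coincide
  have key : 1 + 2 * Real.pi - β + 4 * Real.sin (αβ / 2)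
      = 1 + 2 * Real.pi - αβ + 2 * Real.sin (αβ / 2) := by linarith
  constructor
  · intro α hα0 hαle
    have hαπ : α ≤ Real.pi := le_trans hαle (min_le_left _ _)
    rw [key, max_self]
    rcases le_total α αβ with hc | hc
    · -- use c₁₂ : g monotone
      have hg := mono_g hc
      simp only at hg
      refine le_trans ?_ (le_max_right _ _)
      linarith
    · -- use c₁₁ : sin monotone on [-π/2, π/2]
      have hsin : Real.sin (αβ / 2) ≤ Real.sin (α / 2) := by
        apply Real.strictMonoOn_sin.monotoneOn
        · constructor <;> [linarith; linarith]
        · constructor <;> [linarith; linarith]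
        · linarith
      refine le_trans ?_ (le_max_left _ _)
      linarith
  · rw [key, max_self]
end

section
/- Let β ∈ [γ, 2π). Then for every α with 0 < α ≤ min(π, 2π − β), one has max(c¹₁(2π − β), c¹₂(2π − β)) ≤ max(c¹₁(α), c¹₂(α)), and moreover max(c¹₁(2π − β), c¹₂(2π − β)) = 1 + β + 2·sin(β/2). (Hence the optimal 1-Jump Algorithm for β > γ chooses jump 2π − β and terminates in time 1 + β + 2·sin(β/2).) -/
lemma sin_sub_sin_le (x y : ℝ) : Real.sin y - Real.sin x ≤ |y - x| := by
  rw [Real.sin_sub_sin]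
  calc 2 * Real.sin ((y - x) / 2) * Real.cos ((y + x) / 2)
      ≤ |2 * Real.sin ((y - x) / 2) * Real.cos ((y + x) / 2)| := le_abs_self _
    _ = 2 * |Real.sin ((y - x) / 2)| * |Real.cos ((y + x) / 2)| := by
        rw [abs_mul, abs_mul, abs_two]
    _ ≤ 2 * |(y - x) / 2| * 1 := by
        apply mul_le_mul (by nlinarith [Real.abs_sin_le_abs (x := (y - x) / 2)])
          (Real.abs_cos_le_one _) (abs_nonneg _) (by positivity)
    _ = |y - x| := by rw [abs_div, abs_two]; ring

/-- For `β ∈ [γ, 2π)`, the jump `2π − β` minimizes `max(c¹₁(α), c¹₂(α))` over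
all valid jumps `α`, and the optimal value is `1 + β + 2 sin(β/2)`. -/
theorem stmt_8 (γ β : ℝ) (hγ : γ - Real.sin (γ / 2) = Real.pi)
    (hβ : β ∈ Set.Ico γ (2 * Real.pi)) :
    (∀ α : ℝ, 0 < α → α ≤ min Real.pi (2 * Real.pi - β) →
      max (1 + 2 * Real.pi - β + 4 * Real.sin ((2 * Real.pi - β) / 2))
          (1 + 2 * Real.pi - (2 * Real.pi - β) + 2 * Real.sin ((2 * Real.pi - β) / 2)) ≤
      max (1 + 2 * Real.pi - β + 4 * Real.sin (α / 2))
          (1 + 2 * Real.pi - α + 2 * Real.sin (α / 2))) ∧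
    max (1 + 2 * Real.pi - β + 4 * Real.sin ((2 * Real.pi - β) / 2))
        (1 + 2 * Real.pi - (2 * Real.pi - β) + 2 * Real.sin ((2 * Real.pi - β) / 2)) =
      1 + β + 2 * Real.sin (β / 2) := by
  obtain ⟨hγβ, hβ2π⟩ := hβ
  have hsin : Real.sin ((2 * Real.pi - β) / 2) = Real.sin (β / 2) := by
    have : (2 * Real.pi - β) / 2 = Real.pi - β / 2 := by ring
    rw [this, Real.sin_pi_sub]
  -- β - sin(β/2) ≥ π
  have hkey : Real.pi ≤ β - Real.sin (β / 2) := by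
    have h1 : Real.sin (β / 2) - Real.sin (γ / 2) ≤ |β / 2 - γ / 2| := sin_sub_sin_le _ _
    have h2 : |β / 2 - γ / 2| = (β - γ) / 2 := by
      rw [abs_of_nonneg (by linarith)]; ring
    rw [h2] at h1
    linarith
  -- c₁(2π-β) ≤ c₂(2π-β)
  have hle : 1 + 2 * Real.pi - β + 4 * Real.sin ((2 * Real.pi - β) / 2) ≤
      1 + 2 * Real.pi - (2 * Real.pi - β) + 2 * Real.sin ((2 * Real.pi - β) / 2) := by
    rw [hsin]; linarith
  have hmax : max (1 + 2 * Real.pi - β + 4 * Real.sin ((2 * Real.pi - β) / 2))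
      (1 + 2 * Real.pi - (2 * Real.pi - β) + 2 * Real.sin ((2 * Real.pi - β) / 2)) =
      1 + β + 2 * Real.sin (β / 2) := by
    rw [max_eq_right hle, hsin]; ring
  refine ⟨fun α hα hαle => ?_, hmax⟩
  rw [hmax]
  have hαt : α ≤ 2 * Real.pi - β := le_trans hαle (min_le_right _ _)
  -- c₂ decreasing: 1 + β + 2 sin(β/2) ≤ c₂(α)
  have h1 : Real.sin ((2 * Real.pi - β) / 2) - Real.sin (α / 2) ≤
      |(2 * Real.pi - β) / 2 - α / 2| := sin_sub_sin_le _ _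
  have h2 : |(2 * Real.pi - β) / 2 - α / 2| = ((2 * Real.pi - β) - α) / 2 := by
    rw [abs_of_nonneg (by linarith)]; ring
  rw [h2, hsin] at h1
  have : 1 + β + 2 * Real.sin (β / 2) ≤ 1 + 2 * Real.pi - α + 2 * Real.sin (α / 2) := by
    linarith
  exact le_trans this (le_max_right _ _)
end

section
/- Let β ∈ (0, 2π) and let (α_i)_{i≥1} be the halving jump sequence for β. For every i ≥ 1: if β > h_i then α_i = 2π − β; and if j ≥ 1 is such that h_{j−1} < β ≤ h_j and j ≤ i, then α_i = (jβ − (j−1)·2π)/2^{i−j+1}. -/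
/-- Closed form for the `i`-th jump of the Halving Algorithm, in terms of the
thresholds `h_t = 2π(t+1)/(t+2)` (with `h₀ = 0`). -/
theorem stmt_10 (β : ℝ) (hβ : β ∈ Set.Ioo 0 (2 * Real.pi))
    (a e : ℕ → ℝ) (he0 : e 0 = 0)
    (ha : ∀ i : ℕ, a (i + 1) = min ((β - e i) / 2) (2 * Real.pi - β))
    (he : ∀ i : ℕ, e (i + 1) = e i + a (i + 1))
    (h : ℕ → ℝ) (hh0 : h 0 = 0)
    (hh : ∀ t : ℕ, 1 ≤ t → h t = 2 * Real.pi * (t + 1) / (t + 2)) :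
    ∀ i : ℕ, 1 ≤ i →
      (β > h i → a i = 2 * Real.pi - β) ∧
      (∀ j : ℕ, 1 ≤ j → j ≤ i → h (j - 1) < β → β ≤ h j →
        a i = ((j : ℝ) * β - ((j : ℝ) - 1) * (2 * Real.pi)) / 2 ^ (i - j + 1)) := by
  obtain ⟨hβ0, hβ2⟩ := hβ
  have hπ : (0:ℝ) < Real.pi := Real.pi_pos
  have hstep : ∀ k : ℕ, h k ≤ h (k+1) := by
    intro k
    rcases Nat.eq_zero_or_pos k with hk | hk
    · subst hk
      rw [hh0, hh 1 le_rfl]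
      positivity
    · rw [hh k hk, hh (k+1) (by omega)]
      rw [div_le_div_iff₀ (by positivity) (by positivity)]
      push_cast
      nlinarith [hπ, (Nat.cast_nonneg k : (0:ℝ) ≤ k)]
  have key : ∀ k : ℕ, β > h k → e k = k * (2 * Real.pi - β) := by
    intro k
    induction k with
    | zero => intro _; simp [he0]
    | succ n ih =>
      intro hk
      have hn : β > h n := lt_of_le_of_lt (hstep n) hk
      have hen := ih hn
      have hmin : min ((β - e n) / 2) (2 * Real.pi - β) = 2 * Real.pi - β := by
        apply min_eq_right
        rw [hen]
        rw [hh (n+1) (by omega), gt_iff_lt, div_lt_iff₀ (by positivity)] at hk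
        push_cast at hk ⊢
        nlinarith [(Nat.cast_nonneg n : (0:ℝ) ≤ n)]
      rw [he n, ha n, hmin, hen]
      push_cast; ring
  intro i hi
  constructor
  · intro hgt
    obtain ⟨k, rfl⟩ : ∃ k, i = k + 1 := ⟨i - 1, by omega⟩
    have hk : β > h k := lt_of_le_of_lt (hstep k) hgt
    have hen := key k hk
    rw [ha k]
    apply min_eq_right
    rw [hen]
    rw [hh (k+1) (by omega), gt_iff_lt, div_lt_iff₀ (by positivity)] at hgt
    push_cast at hgt ⊢
    nlinarith [(Nat.cast_nonneg k : (0:ℝ) ≤ k)]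
  · intro j hj hji hj1 hj2
    set c : ℝ := (j:ℝ) * β - ((j:ℝ) - 1) * (2 * Real.pi) with hc
    have hjcast : ((j - 1 : ℕ) : ℝ) = (j:ℝ) - 1 := by
      have : (1:ℕ) ≤ j := hj
      push_cast [this]; ring
    have hc2 : c ≤ 2 * (2 * Real.pi - β) := by
      rw [hh j hj, le_div_iff₀ (by positivity)] at hj2
      rw [hc]; nlinarith
    have hcpos : 0 < c := by
      rcases eq_or_lt_of_le hj with h1 | h1
      · have hcb : c = β := by rw [hc, ← h1]; push_cast; ring
        rw [hcb]; exact hβ0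
      · have hj1' : 1 ≤ j - 1 := by omega
        rw [hh (j-1) hj1', div_lt_iff₀ (by positivity), hjcast] at hj1
        rw [hc]
        nlinarith [(Nat.cast_nonneg j : (0:ℝ) ≤ j)]
    have hej1 : e (j-1) = ((j:ℝ) - 1) * (2 * Real.pi - β) := by
      rw [key (j-1) hj1, hjcast]
    have main : ∀ d : ℕ, a (j + d) = c / 2^(d+1) ∧ e (j + d) = β - c / 2^(d+1) := by
      intro d
      induction d with
      | zero =>
        have hjj : j = (j - 1) + 1 := by omega
        have haj : a j = c / 2 := by
          have harg : (β - (↑j - 1) * (2 * Real.pi - β)) / 2 = c / 2 := by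
            rw [hc]; ring
          have hle0 : (β - (↑j - 1) * (2 * Real.pi - β)) / 2 ≤ 2 * Real.pi - β := by
            rw [harg]; linarith
          rw [hjj, ha (j-1), hej1, min_eq_left hle0, harg]
        constructor
        · simpa using haj
        · rw [show j + 0 = (j-1)+1 from by omega, he (j-1), hej1, ← hjj, haj, hc]
          ring
      | succ d ih =>
        obtain ⟨had, hed⟩ := ih
        have hle : c / 2^(d+1+1) ≤ 2 * Real.pi - β := by
          have h21 : (2:ℝ) ≤ 2^(d+1+1) := by
            calc (2:ℝ) = 2^1 := by norm_num
            _ ≤ 2^(d+1+1) := by apply pow_le_pow_right₀ (by norm_num); omega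
          have : c / 2^(d+1+1) ≤ c / 2 :=
            div_le_div_of_nonneg_left hcpos.le (by norm_num) h21
          linarith
        have haeq : a (j + d + 1) = c / 2^(d+1+1) := by
          have harg : (β - (β - c / 2^(d+1))) / 2 = c / 2^(d+1+1) := by
            rw [pow_succ]; ring
          rw [ha (j+d), hed, harg, min_eq_left hle]
        refine ⟨?_, ?_⟩
        · rw [show j + (d+1) = j + d + 1 from by omega]; exact haeq
        · rw [show j + (d+1) = j + d + 1 from by omega, he (j+d), hed, haeq, pow_succ]
          ring
    obtain ⟨ha', _⟩ := main (i - j)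
    rw [show j + (i - j) = i from by omega] at ha'
    exact ha'
end

section
/- For all integers 1 ≤ j ≤ i and every β with h_{j−1} < β ≤ h_j, one has 0 < (jβ − (j−1)·2π)/2^{i−j+1} ≤ 2π − β. -/
/-- For `1 ≤ j ≤ i` and `h_{j−1} < β ≤ h_j`, the candidate jump
`(jβ − (j−1)2π)/2^{i−j+1}` is positive and at most `2π − β`. -/
theorem stmt_11 (β : ℝ) (h : ℕ → ℝ) (hh0 : h 0 = 0)
    (hh : ∀ t : ℕ, 1 ≤ t → h t = 2 * Real.pi * (t + 1) / (t + 2)) :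
    ∀ i j : ℕ, 1 ≤ j → j ≤ i → h (j - 1) < β → β ≤ h j →
      0 < ((j : ℝ) * β - ((j : ℝ) - 1) * (2 * Real.pi)) / 2 ^ (i - j + 1) ∧
      ((j : ℝ) * β - ((j : ℝ) - 1) * (2 * Real.pi)) / 2 ^ (i - j + 1) ≤
        2 * Real.pi - β := by
  intro i j hj hji hβl hβu
  have hπ := Real.pi_pos
  set x : ℝ := (j : ℝ) with hx
  have hx1 : (1:ℝ) ≤ x := by rw [hx]; exact_mod_cast hj
  -- upper bound on β
  have hβu' : β * (x + 2) ≤ 2 * Real.pi * (x + 1) := by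
    rw [hh j hj] at hβu
    have h2 : (0:ℝ) < x + 2 := by linarith
    rw [le_div_iff₀ h2] at hβu
    linarith
  -- numerator positivity
  have hnum : 0 < x * β - (x - 1) * (2 * Real.pi) := by
    rcases eq_or_lt_of_le hj with hj1 | hj2
    · have hj1' : j = 1 := hj1.symm
      subst hj1'
      simp only [Nat.sub_self, hh0] at hβl
      simp only [hx, Nat.cast_one]
      linarith
    · have hj1 : 1 ≤ j - 1 := by omega
      rw [hh (j - 1) hj1] at hβl
      have hcast : ((j - 1 : ℕ) : ℝ) = x - 1 := by
        have : (1:ℕ) ≤ j := hj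
        push_cast [this]
        ring
      rw [hcast] at hβl
      have hx2 : (2:ℝ) ≤ x := by rw [hx]; exact_mod_cast hj2
      have hden : (0:ℝ) < x - 1 + 2 := by linarith
      rw [div_lt_iff₀ hden] at hβl
      -- hβl : 2π(x-1+1) < β(x-1+2), i.e. 2πx < β(x+1)
      nlinarith [mul_pos hπ (sub_pos.mpr (lt_of_lt_of_le one_lt_two hx2))]
  -- 2 ≤ 2^(i-j+1)
  have hpow : (2:ℝ) ≤ 2 ^ (i - j + 1) := by
    calc (2:ℝ) = 2 ^ 1 := by norm_num
    _ ≤ 2 ^ (i - j + 1) := by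
        apply pow_le_pow_right₀ (by norm_num) (by omega)
  have hpowpos : (0:ℝ) < 2 ^ (i - j + 1) := by positivity
  constructor
  · positivity
  · calc (x * β - (x - 1) * (2 * Real.pi)) / 2 ^ (i - j + 1)
        ≤ (x * β - (x - 1) * (2 * Real.pi)) / 2 :=
          div_le_div_of_nonneg_left hnum.le (by norm_num) hpow
    _ ≤ 2 * Real.pi - β := by linarith
end

section
/- Let β ∈ (0, 2π), let (α_i)_{i≥1} be the halving jump sequence for β, and let 1 ≤ j ≤ i be integers with h_{j−1} < β ≤ h_j. Then Σ_{r=1}^{i−1} α_r = (β(2^{i−j} − j) + 2π(j−1))/2^{i−j}. -/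
/-- The explored part of the fence before the `i`-th jump of the Halving
Algorithm, when `h_{j−1} < β ≤ h_j` and `1 ≤ j ≤ i`. -/
theorem stmt_12 (β : ℝ) (hβ : β ∈ Set.Ioo 0 (2 * Real.pi))
    (a e : ℕ → ℝ) (he0 : e 0 = 0)
    (ha : ∀ i : ℕ, a (i + 1) = min ((β - e i) / 2) (2 * Real.pi - β))
    (he : ∀ i : ℕ, e (i + 1) = e i + a (i + 1))
    (h : ℕ → ℝ) (hh0 : h 0 = 0)
    (hh : ∀ t : ℕ, 1 ≤ t → h t = 2 * Real.pi * (t + 1) / (t + 2))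
    (i j : ℕ) (hj : 1 ≤ j) (hij : j ≤ i)
    (h1 : h (j - 1) < β) (h2 : β ≤ h j) :
    ∑ r ∈ Finset.Icc 1 (i - 1), a r =
      (β * (2 ^ (i - j) - (j : ℝ)) + 2 * Real.pi * ((j : ℝ) - 1)) / 2 ^ (i - j) := by
  obtain ⟨hβ0, hβ2⟩ := hβ
  have hπ : (0:ℝ) < Real.pi := Real.pi_pos
  have hjR : (1:ℝ) ≤ (j:ℝ) := by exact_mod_cast hj
  -- strong form of h1 (only valid for j ≥ 2): 2π*j < β*(j+1)
  have key1b : 2 ≤ j → 2 * Real.pi * (j:ℝ) < β * ((j:ℝ) + 1) := by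
    intro hj2
    have hfe : h (j - 1) = 2 * Real.pi * (((j-1:ℕ):ℝ) + 1) / (((j-1:ℕ):ℝ) + 2) := hh (j-1) (by omega)
    rw [hfe] at h1
    have hc : ((j-1:ℕ):ℝ) = (j:ℝ) - 1 := by push_cast [Nat.cast_sub hj]; ring
    rw [hc] at h1
    have hd : (0:ℝ) < (j:ℝ) - 1 + 2 := by linarith
    rw [div_lt_iff₀ hd] at h1
    nlinarith
  -- weak form valid for all j ≥ 1: 2π*(j-1) < β*j
  have key1 : 2 * Real.pi * ((j:ℝ) - 1) < β * (j:ℝ) := by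
    rcases Nat.eq_or_lt_of_le hj with h' | h'
    · subst h'; norm_num; linarith
    · have := key1b h'
      nlinarith [hπ]
  -- h2 in usable form: β*(j+2) ≤ 2π*(j+1)
  have key2 : β * ((j:ℝ) + 2) ≤ 2 * Real.pi * ((j:ℝ) + 1) := by
    have hfe : h j = 2 * Real.pi * ((j:ℝ) + 1) / ((j:ℝ) + 2) := hh j hj
    rw [hfe] at h2
    have hd : (0:ℝ) < (j:ℝ) + 2 := by positivity
    rw [le_div_iff₀ hd] at h2
    linarith
  -- phase 1
  have phase1 : ∀ k, k ≤ j - 1 → e k = k * (2 * Real.pi - β) := by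
    intro k hk
    induction k with
    | zero => simp [he0]
    | succ k ih =>
      have hk' : k ≤ j - 1 := by omega
      have hj2 : 2 ≤ j := by omega
      have hkj : (k:ℝ) + 2 ≤ (j:ℝ) := by exact_mod_cast (by omega : k + 2 ≤ j)
      have hek := ih hk'
      have hb := key1b hj2
      have hmin : 2 * Real.pi - β ≤ (β - e k) / 2 := by
        rw [hek, le_div_iff₀ (by norm_num : (0:ℝ) < 2)]
        nlinarith [hπ, mul_pos hπ (show (0:ℝ) < (j:ℝ) - (k:ℝ) - 1 by linarith)]
      have hA : a (k+1) = 2 * Real.pi - β := by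
        rw [ha k]; exact min_eq_right hmin
      rw [he k, hA, hek]
      push_cast; ring
  have hej : e (j-1) = ((j:ℝ) - 1) * (2 * Real.pi - β) := by
    have := phase1 (j-1) le_rfl
    rwa [show ((j-1:ℕ):ℝ) = (j:ℝ) - 1 by push_cast [Nat.cast_sub hj]; ring] at this
  have hpos : 0 ≤ β - e (j-1) := by rw [hej]; nlinarith
  have hcond : (β - e (j-1)) / 2 ≤ 2 * Real.pi - β := by rw [hej]; nlinarith
  -- phase 2
  have phase2 : ∀ n, β - e (j - 1 + n) = (β - e (j-1)) / 2 ^ n := by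
    intro n
    induction n with
    | zero => simp
    | succ n ih =>
      have h2n : (1:ℝ) ≤ 2 ^ n := one_le_pow₀ (by norm_num)
      have hmin : (β - e (j - 1 + n)) / 2 ≤ 2 * Real.pi - β := by
        rw [ih]
        have : (β - e (j-1)) / 2 ^ n ≤ β - e (j-1) := by
          rw [div_le_iff₀ (by positivity)]
          nlinarith
        linarith
      have hstep : a (j - 1 + n + 1) = (β - e (j - 1 + n)) / 2 := by
        rw [ha (j - 1 + n)]; exact min_eq_left hmin
      have hE : e (j - 1 + n) = β - (β - e (j-1)) / 2 ^ n := by linarith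
      rw [show j - 1 + (n + 1) = (j - 1 + n) + 1 from rfl, he (j - 1 + n), hstep, hE]
      ring
  -- sum equals e
  have hsum : ∀ m, ∑ r ∈ Finset.Icc 1 m, a r = e m := by
    intro m
    induction m with
    | zero => simp [he0]
    | succ m ih =>
      rw [Finset.sum_Icc_succ_top (by omega : 1 ≤ m + 1), ih, he m]
  rw [hsum]
  have hi1 : i - 1 = j - 1 + (i - j) := by omega
  have hphi := phase2 (i - j)
  rw [← hi1] at hphi
  have hei : e (i-1) = β - (β - e (j-1)) / 2 ^ (i - j) := by linarith
  rw [hei, hej]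
  have hp : (0:ℝ) < 2 ^ (i - j) := by positivity
  field_simp
  ring
end

section
/- Let β ∈ (0, 2π) and let (α_i)_{i≥1} be the halving jump sequence for β. Then for every integer i ≥ 1: if i < ρ_β then α_i = 2π − β, and if i ≥ ρ_β then α_i = (2π − ⌈ρ_β⌉(2π − β))/2^{i−⌈ρ_β⌉+1}. -/
/-- Closed form for the `i`-th jump of the Halving Algorithm in terms of
`ρ_β = max((2β − 2π)/(2π − β), 1)`. -/
theorem stmt_13 (β : ℝ) (hβ : β ∈ Set.Ioo 0 (2 * Real.pi))
    (a e : ℕ → ℝ) (he0 : e 0 = 0)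
    (ha : ∀ i : ℕ, a (i + 1) = min ((β - e i) / 2) (2 * Real.pi - β))
    (he : ∀ i : ℕ, e (i + 1) = e i + a (i + 1))
    (ρ : ℝ) (hρ : ρ = max ((2 * β - 2 * Real.pi) / (2 * Real.pi - β)) 1) :
    ∀ i : ℕ, 1 ≤ i →
      ((i : ℝ) < ρ → a i = 2 * Real.pi - β) ∧
      (ρ ≤ (i : ℝ) →
        a i = (2 * Real.pi - (⌈ρ⌉₊ : ℝ) * (2 * Real.pi - β)) / 2 ^ (i - ⌈ρ⌉₊ + 1)) := by
  obtain ⟨hβ0, hβ2⟩ := hβ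
  have hδ : 0 < 2 * Real.pi - β := by linarith
  have hρ1 : (1:ℝ) ≤ ρ := by rw [hρ]; exact le_max_right _ _
  have hx : (2 * β - 2 * Real.pi) / (2 * Real.pi - β) ≤ ρ := by
    rw [hρ]; exact le_max_left _ _
  have h1 : 2 * β - 2 * Real.pi ≤ ρ * (2 * Real.pi - β) := (div_le_iff₀ hδ).mp hx
  have hρn : ρ ≤ (⌈ρ⌉₊ : ℝ) := Nat.le_ceil ρ
  have hn1 : 1 ≤ ⌈ρ⌉₊ := Nat.one_le_ceil_iff.mpr (by linarith)
  have hnρ : (⌈ρ⌉₊ : ℝ) < ρ + 1 := Nat.ceil_lt_add_one (by linarith)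
  have hub : 2 * Real.pi - (⌈ρ⌉₊ : ℝ) * (2 * Real.pi - β) ≤ 2 * (2 * Real.pi - β) := by
    nlinarith
  have hc : 0 < 2 * Real.pi - (⌈ρ⌉₊ : ℝ) * (2 * Real.pi - β) := by
    rcases le_or_gt ((2 * β - 2 * Real.pi) / (2 * Real.pi - β)) 1 with h | h
    · have hρe : ρ = 1 := by rw [hρ, max_eq_right h]
      have hne : ⌈ρ⌉₊ = 1 := by rw [hρe]; simp
      rw [hne]; push_cast; linarith
    · have hρe : ρ = (2 * β - 2 * Real.pi) / (2 * Real.pi - β) := by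
        rw [hρ, max_eq_left h.le]
      have h2 : (⌈ρ⌉₊ : ℝ) - 1 < (2 * β - 2 * Real.pi) / (2 * Real.pi - β) := by
        rw [← hρe]; linarith
      have h3 : ((⌈ρ⌉₊ : ℝ) - 1) * (2 * Real.pi - β) < 2 * β - 2 * Real.pi :=
        (lt_div_iff₀ hδ).mp h2
      nlinarith
  have hlt : ∀ j : ℕ, ((j:ℝ) + 1) < ρ →
      2 * Real.pi - β ≤ (β - (j:ℝ) * (2 * Real.pi - β)) / 2 := by
    intro j hj
    have hj1 : (1:ℝ) ≤ (j:ℝ) + 1 := by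
      have := Nat.cast_nonneg (α := ℝ) j; linarith
    have hone : (1:ℝ) < ρ := lt_of_le_of_lt hj1 hj
    have hxρ : ρ = (2 * β - 2 * Real.pi) / (2 * Real.pi - β) := by
      rw [hρ] at hone ⊢
      rcases lt_max_iff.mp hone with h | h
      · exact max_eq_left h.le
      · exact absurd h (lt_irrefl 1)
    rw [hxρ] at hj
    have h4 := (lt_div_iff₀ hδ).mp hj
    rw [le_div_iff₀ (by norm_num : (0:ℝ) < 2)]
    nlinarith
  have hA : ∀ j : ℕ, ((j:ℝ) + 1) < ρ → e j = (j:ℝ) * (2 * Real.pi - β) →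
      a (j + 1) = 2 * Real.pi - β := by
    intro j hj hej
    rw [ha, hej, min_eq_right (hlt j hj)]
  have hB : ∀ j : ℕ, j + 1 = ⌈ρ⌉₊ → e j = (j:ℝ) * (2 * Real.pi - β) →
      a (j + 1) = (2 * Real.pi - (⌈ρ⌉₊ : ℝ) * (2 * Real.pi - β)) / 2 := by
    intro j hj hej
    have hjc : (j:ℝ) = (⌈ρ⌉₊ : ℝ) - 1 := by
      have := congrArg (Nat.cast (R := ℝ)) hj
      push_cast at this; linarith
    have hle : (β - e j) / 2 ≤ 2 * Real.pi - β := by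
      rw [hej, hjc, div_le_iff₀ (by norm_num : (0:ℝ) < 2)]
      nlinarith
    rw [ha, min_eq_left hle, hej, hjc]
    ring
  have hC : ∀ j : ℕ, ⌈ρ⌉₊ ≤ j →
      e j = β - (2 * Real.pi - (⌈ρ⌉₊ : ℝ) * (2 * Real.pi - β)) / 2 ^ (j - ⌈ρ⌉₊ + 1) →
      a (j + 1) = (2 * Real.pi - (⌈ρ⌉₊ : ℝ) * (2 * Real.pi - β)) / 2 ^ (j - ⌈ρ⌉₊ + 2) := by
    intro j hj hej
    have hK : (2:ℝ) ≤ 2 ^ (j - ⌈ρ⌉₊ + 1) := by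
      calc (2:ℝ) = 2 ^ 1 := (pow_one 2).symm
      _ ≤ 2 ^ (j - ⌈ρ⌉₊ + 1) := by
          apply pow_le_pow_right₀ (by norm_num)
          omega
    have hK0 : (0:ℝ) < 2 ^ (j - ⌈ρ⌉₊ + 1) := by positivity
    have hq : (2 * Real.pi - (⌈ρ⌉₊ : ℝ) * (2 * Real.pi - β)) / 2 ^ (j - ⌈ρ⌉₊ + 1)
        ≤ (2 * Real.pi - (⌈ρ⌉₊ : ℝ) * (2 * Real.pi - β)) / 2 :=
      div_le_div_of_nonneg_left hc.le (by norm_num) hK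
    have hle : (β - e j) / 2 ≤ 2 * Real.pi - β := by
      rw [hej]
      have h2 : (β - (β - (2 * Real.pi - (⌈ρ⌉₊ : ℝ) * (2 * Real.pi - β)) /
          2 ^ (j - ⌈ρ⌉₊ + 1))) / 2
          = ((2 * Real.pi - (⌈ρ⌉₊ : ℝ) * (2 * Real.pi - β)) / 2 ^ (j - ⌈ρ⌉₊ + 1)) / 2 := by
        ring
      rw [h2]
      linarith
    rw [ha, min_eq_left hle, hej,
      show j - ⌈ρ⌉₊ + 2 = (j - ⌈ρ⌉₊ + 1) + 1 from rfl, pow_succ, ← div_div]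
    ring
  have keyE : ∀ i : ℕ,
      (i < ⌈ρ⌉₊ → e i = (i:ℝ) * (2 * Real.pi - β)) ∧
      (⌈ρ⌉₊ ≤ i → e i = β - (2 * Real.pi - (⌈ρ⌉₊ : ℝ) * (2 * Real.pi - β)) /
        2 ^ (i - ⌈ρ⌉₊ + 1)) := by
    intro i
    induction i with
    | zero =>
      exact ⟨fun _ => by simpa using he0, fun h => absurd h (by omega)⟩
    | succ i ih =>
      constructor
      · intro hi1
        have hi : i < ⌈ρ⌉₊ := by omega
        have hiρ : ((i:ℝ) + 1) < ρ := by
          have := Nat.lt_ceil.mp hi1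
          push_cast at this; linarith
        rw [he, ih.1 hi, hA i hiρ (ih.1 hi)]
        push_cast; ring
      · intro hi1
        rcases Nat.lt_or_ge i ⌈ρ⌉₊ with hi | hi
        · have hjeq : i + 1 = ⌈ρ⌉₊ := by omega
          rw [he, ih.1 hi, hB i hjeq (ih.1 hi)]
          have hexp : i + 1 - ⌈ρ⌉₊ + 1 = 1 := by omega
          rw [hexp]
          have hjc : (i:ℝ) = (⌈ρ⌉₊ : ℝ) - 1 := by
            have := congrArg (Nat.cast (R := ℝ)) hjeq
            push_cast at this; linarith
          rw [hjc]; ring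
        · have hei := ih.2 hi
          rw [he, hei, hC i hi hei]
          have hexp : i + 1 - ⌈ρ⌉₊ + 1 = (i - ⌈ρ⌉₊ + 1) + 1 := by omega
          rw [hexp, pow_succ,
            show i - ⌈ρ⌉₊ + 2 = (i - ⌈ρ⌉₊ + 1) + 1 from rfl, pow_succ, ← div_div, ← div_div]
          ring
  intro i hi
  obtain ⟨j, rfl⟩ : ∃ j, i = j + 1 := ⟨i - 1, by omega⟩
  constructor
  · intro hiρ
    have hjρ : ((j:ℝ) + 1) < ρ := by push_cast at hiρ; linarith
    have hjn : j + 1 < ⌈ρ⌉₊ := Nat.lt_ceil.mpr (by push_cast; linarith)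
    exact hA j hjρ ((keyE j).1 (by omega))
  · intro hiρ
    have hni : ⌈ρ⌉₊ ≤ j + 1 := Nat.ceil_le.mpr hiρ
    rcases Nat.lt_or_ge j ⌈ρ⌉₊ with hj | hj
    · have hjeq : j + 1 = ⌈ρ⌉₊ := by omega
      rw [hB j hjeq ((keyE j).1 hj)]
      rw [show j + 1 - ⌈ρ⌉₊ + 1 = 1 from by omega, pow_one]
    · rw [hC j hj ((keyE j).2 hj)]
      rw [show j + 1 - ⌈ρ⌉₊ + 1 = j - ⌈ρ⌉₊ + 2 from by omega]
end

section
/- Let β ∈ (0, 2π), let (α_i)_{i≥1} be the halving jump sequence for β, and set α₀ = β. Then for every integer t ≥ 1, 4·sin(α_t/2) ≥ 2·sin(α_{t−1}/2). -/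
/-- For the halving jump sequence with `α₀ = β`, every consecutive pair of
jumps satisfies `4 sin(α_t/2) ≥ 2 sin(α_{t−1}/2)`. -/
theorem stmt_14 (β : ℝ) (hβ : β ∈ Set.Ioo 0 (2 * Real.pi))
    (a e : ℕ → ℝ) (he0 : e 0 = 0) (ha0 : a 0 = β)
    (ha : ∀ i : ℕ, a (i + 1) = min ((β - e i) / 2) (2 * Real.pi - β))
    (he : ∀ i : ℕ, e (i + 1) = e i + a (i + 1)) :
    ∀ t : ℕ, 1 ≤ t →
      4 * Real.sin (a t / 2) ≥ 2 * Real.sin (a (t - 1) / 2) := by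
  obtain ⟨hβ0, hβ2⟩ := hβ
  have hpi : (0:ℝ) < Real.pi := Real.pi_pos
  have heb : ∀ i, e i < β := by
    intro i
    induction i with
    | zero => simpa [he0] using hβ0
    | succ n ih =>
      have h1 : a (n + 1) ≤ (β - e n) / 2 := (ha n).le.trans (min_le_left _ _)
      have := he n
      nlinarith
  have apos : ∀ i, 0 < a (i + 1) := by
    intro i
    rw [ha i]
    exact lt_min (by nlinarith [heb i]) (by linarith)
  have ale : ∀ i, a (i + 1) ≤ (β - e i) / 2 := fun i => (ha i).le.trans (min_le_left _ _)
  have ale2 : ∀ i, a (i + 1) ≤ 2 * Real.pi - β := fun i => (ha i).le.trans (min_le_right _ _)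
  have aβ : ∀ i, a (i + 1) ≤ β / 2 := by
    intro i
    have h0 : 0 ≤ e i := by
      induction i with
      | zero => simp [he0]
      | succ n ih => rw [he n]; nlinarith [apos n]
    have := ale i; linarith
  have hmono := Real.strictMonoOn_sin.monotoneOn
  intro t ht
  match t, ht with
  | 1, _ =>
    simp only [Nat.sub_self, ha0]
    rw [ha 0, he0, sub_zero]
    rcases le_or_gt (β / 2) (2 * Real.pi - β) with h | h
    · rw [min_eq_left h]
      have h4 : 0 ≤ β / 2 / 2 := by linarith
      have h4' : β / 2 / 2 ≤ Real.pi := by linarith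
      have hs : 0 ≤ Real.sin (β / 2 / 2) := Real.sin_nonneg_of_nonneg_of_le_pi h4 h4'
      have hc : Real.cos (β / 2 / 2) ≤ 1 := Real.cos_le_one _
      have hd : Real.sin (β / 2) = 2 * Real.sin (β / 2 / 2) * Real.cos (β / 2 / 2) := by
        rw [← Real.sin_two_mul]; ring_nf
      rw [hd]; nlinarith
    · rw [min_eq_right h.le]
      have : (2 * Real.pi - β) / 2 = Real.pi - β / 2 := by ring
      rw [this, Real.sin_pi_sub]
      have hs : 0 ≤ Real.sin (β / 2) :=
        Real.sin_nonneg_of_nonneg_of_le_pi (by linarith) (by linarith)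
      linarith
  | (s + 2), _ =>
    show 4 * Real.sin (a (s + 2) / 2) ≥ 2 * Real.sin (a (s + 1) / 2)
    -- key: a (s+2) ≥ a (s+1) / 2
    have hkey : a (s + 1) / 2 ≤ a (s + 2) := by
      rw [ha (s + 1), he s]
      refine le_min ?_ (by linarith [ale2 s, apos s])
      have := ale s; linarith
    set x := a (s + 2) / 2 with hx
    set y := a (s + 1) / 2 with hy
    have hy0 : 0 < y := by have := apos s; positivity
    have hx0 : 0 < x := by have := apos (s + 1); positivity
    have hyβ : y ≤ β / 4 := by have := aβ s; simp [hy]; linarith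
    have hxβ : x ≤ β / 4 := by have := aβ (s + 1); simp [hx]; linarith
    have hxpi : x ≤ Real.pi / 2 := by linarith
    have h1 : Real.sin (y / 2) ≤ Real.sin x := by
      apply hmono (Set.mem_Icc.2 ⟨by linarith, by linarith⟩)
        (Set.mem_Icc.2 ⟨by linarith, hxpi⟩)
      linarith
    have hs : 0 ≤ Real.sin (y / 2) :=
      Real.sin_nonneg_of_nonneg_of_le_pi (by linarith) (by linarith)
    have hc : Real.cos (y / 2) ≤ 1 := Real.cos_le_one _
    have hd : Real.sin y = 2 * Real.sin (y / 2) * Real.cos (y / 2) := by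
      rw [← Real.sin_two_mul]; ring_nf
    rw [hd] at *
    nlinarith
end

section
/- Let β ∈ (0, 2π), let (α_i)_{i≥1} be the halving jump sequence for β, and let k ≥ 1 be an integer. Then β − Σ_{i=1}^{k} α_i ≥ 2·sin(α_k/2). -/
/-- The unexplored part of the fence after `k` halving jumps is at least
`2 sin(α_k/2)`. -/
theorem stmt_15 (β : ℝ) (hβ : β ∈ Set.Ioo 0 (2 * Real.pi))
    (a e : ℕ → ℝ) (he0 : e 0 = 0)
    (ha : ∀ i : ℕ, a (i + 1) = min ((β - e i) / 2) (2 * Real.pi - β))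
    (he : ∀ i : ℕ, e (i + 1) = e i + a (i + 1))
    (k : ℕ) (hk : 1 ≤ k) :
    β - ∑ i ∈ Finset.Icc 1 k, a i ≥ 2 * Real.sin (a k / 2) := by
  obtain ⟨hβ0, hβ2⟩ := hβ
  have hle : ∀ n, e n ≤ β := by
    intro n
    induction n with
    | zero => simpa [he0] using hβ0.le
    | succ m ih =>
      have hmin := min_le_left ((β - e m) / 2) (2 * Real.pi - β)
      rw [he, ha]
      linarith
  have hsum : ∀ n, e n = ∑ i ∈ Finset.Icc 1 n, a i := by
    intro n
    induction n with
    | zero => simp [he0]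
    | succ m ih =>
      rw [Finset.sum_Icc_succ_top (by omega : 1 ≤ m + 1), he, ih]
  obtain ⟨m, rfl⟩ : ∃ m, k = m + 1 := ⟨k - 1, by omega⟩
  rw [← hsum]
  have hmin := min_le_left ((β - e m) / 2) (2 * Real.pi - β)
  rw [ha m]
  set x := min ((β - e m) / 2) (2 * Real.pi - β) with hx
  have hx0 : 0 ≤ x := le_min (by have := hle m; linarith) (by linarith)
  have hsin : Real.sin (x / 2) ≤ x / 2 := Real.sin_le (by linarith)
  have hek : e (m + 1) = e m + x := by rw [he, ha]
  rw [hek]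
  linarith
end

section
/- Let β ∈ (0, 2π), let (α_i)_{i≥1} be the halving jump sequence for β, and let k be an integer with k ≥ ⌈ρ_β⌉. Then Σ_{i=1}^{k} α_i = β − (2π − ⌈ρ_β⌉(2π − β))/2^{k−⌈ρ_β⌉+1}; equivalently, the unexplored part of the fence after k jumps equals α_k. -/
/-- For `k ≥ ⌈ρ_β⌉`, the total length of the first `k` halving jumps equals
`β − (2π − ⌈ρ_β⌉(2π − β))/2^{k−⌈ρ_β⌉+1}`; equivalently, the unexplored part of
the fence after `k` jumps equals `α_k`. -/
theorem stmt_17 (β : ℝ) (hβ : β ∈ Set.Ioo 0 (2 * Real.pi))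
    (a e : ℕ → ℝ) (he0 : e 0 = 0)
    (ha : ∀ i : ℕ, a (i + 1) = min ((β - e i) / 2) (2 * Real.pi - β))
    (he : ∀ i : ℕ, e (i + 1) = e i + a (i + 1))
    (ρ : ℝ) (hρ : ρ = max ((2 * β - 2 * Real.pi) / (2 * Real.pi - β)) 1)
    (k : ℕ) (hk : ⌈ρ⌉₊ ≤ k) :
    ∑ i ∈ Finset.Icc 1 k, a i =
      β - (2 * Real.pi - (⌈ρ⌉₊ : ℝ) * (2 * Real.pi - β)) / 2 ^ (k - ⌈ρ⌉₊ + 1) ∧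
    β - ∑ i ∈ Finset.Icc 1 k, a i = a k := by
  obtain ⟨hβ0, hβ2π⟩ := hβ
  set T : ℝ := 2 * Real.pi - β with hTdef
  have hT : 0 < T := by simp only [hTdef]; linarith
  set n : ℕ := ⌈ρ⌉₊ with hndef
  have hρ1 : (1:ℝ) ≤ ρ := hρ ▸ le_max_right _ _
  have hn1 : 1 ≤ n := Nat.one_le_ceil_iff.mpr (by linarith)
  have hrρ : (2*β - 2*Real.pi)/T ≤ ρ := by rw [hρ]; exact le_max_left _ _
  have hρn : ρ ≤ (n:ℝ) := Nat.le_ceil ρ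
  have hβle : β ≤ ((n:ℝ)+1) * T := by
    have h := (div_le_iff₀ hT).mp (hrρ.trans hρn)
    have : 2*β - 2*Real.pi = β - T := by rw [hTdef]; ring
    nlinarith
  have hβgt : 2 ≤ n → (n:ℝ) * T < β := by
    intro h2
    have h1 : ((n-1:ℕ):ℝ) < ρ := Nat.lt_ceil.mp (by omega)
    have hc : ((n-1:ℕ):ℝ) = (n:ℝ) - 1 := by
      rw [Nat.cast_sub hn1]; norm_num
    have hge1 : (1:ℝ) ≤ (n:ℝ) - 1 := by
      have : (2:ℝ) ≤ (n:ℝ) := by exact_mod_cast h2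
      linarith
    have hr1 : (1:ℝ) < ρ := by rw [hc] at h1; linarith
    have hρr : ρ = (2*β - 2*Real.pi)/T := by
      rcases le_or_gt ((2*β - 2*Real.pi)/T) 1 with h | h
      · rw [hρ, max_eq_right h] at hr1; linarith
      · rw [hρ, max_eq_left h.le]
    rw [hc, hρr] at h1
    have := (lt_div_iff₀ hT).mp h1
    have : 2*β - 2*Real.pi = β - T := by rw [hTdef]; ring
    nlinarith [(lt_div_iff₀ hT).mp h1]
  have hpos : 0 < β - ((n:ℝ)-1)*T := by
    rcases Nat.lt_or_ge n 2 with h | h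
    · have : n = 1 := by omega
      rw [this]; norm_num; linarith
    · have := hβgt h
      nlinarith
  -- Lemma B : before step n, each jump is T
  have hB : ∀ i, i + 1 ≤ n → e i = i * T := by
    intro i
    induction i with
    | zero => intro _; simp [he0]
    | succ i ih =>
      intro hi
      have h2 : 2 ≤ n := by omega
      have hiT : e i = i * T := ih (by omega)
      have hcast : ((i:ℝ)+2) ≤ (n:ℝ) := by exact_mod_cast (by omega : i + 2 ≤ n)
      have hmin : min ((β - (i:ℝ)*T) / 2) T = T := by
        apply min_eq_right
        have h1 : ((i:ℝ)+2)*T ≤ (n:ℝ)*T := by nlinarith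
        have h3 := hβgt h2
        nlinarith
      rw [he i, ha i, hiT, hmin]
      push_cast; ring
  -- Lemma C : from step n on, halving
  have hC : ∀ m, n ≤ m → (β - e m = (β - ((n:ℝ)-1)*T) / 2 ^ (m - n + 1)) ∧ a m = β - e m := by
    intro m hm
    induction m, hm using Nat.le_induction with
    | base =>
      have hen1 : e (n-1) = ((n-1:ℕ):ℝ) * T := hB (n-1) (by omega)
      have hc : ((n-1:ℕ):ℝ) = (n:ℝ) - 1 := by rw [Nat.cast_sub hn1]; norm_num
      rw [hc] at hen1
      have hneq : n = (n - 1) + 1 := by omega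
      have han : a (n-1+1) = (β - ((n:ℝ)-1)*T)/2 := by
        rw [ha, hen1]
        apply min_eq_left
        nlinarith
      have hen : e n = e (n-1) + a (n-1+1) := by
        conv_lhs => rw [hneq]
        exact he _
      have hexp : n - n + 1 = 1 := by omega
      rw [hexp]
      constructor
      · rw [hen, hen1, han]; ring
      · conv_lhs => rw [hneq]
        rw [han, hen, hen1, han]; ring
    | succ m hm ih =>
      obtain ⟨ih1, _⟩ := ih
      have hexp1 : (1:ℝ) ≤ 2 ^ (m - n + 1) := one_le_pow₀ (by norm_num)
      have hexp2 : (2:ℝ) ≤ 2 ^ (m - n + 1) := by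
        calc (2:ℝ) = 2^1 := by norm_num
        _ ≤ 2 ^ (m - n + 1) := by
          apply pow_le_pow_right₀ (by norm_num); omega
      have hbek : β - e m = (β - ((n:ℝ)-1)*T) / 2 ^ (m - n + 1) := ih1
      have hle : (β - e m)/2 ≤ T := by
        have hbe : β - e m ≤ β - ((n:ℝ)-1)*T := by
          rw [hbek]; exact div_le_self hpos.le hexp1
        have h2 : (β - ((n:ℝ)-1)*T) / 2 ≤ T := by nlinarith
        linarith
      have ham1 : a (m+1) = (β - e m)/2 := by rw [ha]; exact min_eq_left hle
      have hexpn : m + 1 - n + 1 = (m - n + 1) + 1 := by omega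
      have hkey : β - e (m+1) = (β - e m)/2 := by rw [he, ham1]; ring
      rw [hexpn, pow_succ]
      refine ⟨?_, ?_⟩
      · rw [hkey, hbek, div_div]
      · rw [ham1, hkey]
  have hsum : ∀ m, ∑ i ∈ Finset.Icc 1 m, a i = e m := by
    intro m
    induction m with
    | zero => simp [he0]
    | succ m ih =>
      rw [Finset.sum_Icc_succ_top (by omega : 1 ≤ m+1), ih, he]
  obtain ⟨h1, h2⟩ := hC k hk
  have key : 2*Real.pi - (n:ℝ)*T = β - ((n:ℝ)-1)*T := by rw [hTdef]; ring
  constructor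
  · rw [hsum k]
    rw [show 2 * Real.pi - (n:ℝ) * T = β - ((n:ℝ)-1)*T from key]
    linarith
  · rw [hsum k]; linarith
end

section
/- Let β ∈ (0, 2π), let (α_i)_{i≥1} be the halving jump sequence for β, and let k be an integer with k ≥ ⌈ρ_β⌉. Then the cost of the Halving k-Jump Algorithm satisfies 1 + 2π − Σ_{i=1}^{k}(α_i − 2·sin(α_i/2)) = 1 + 2π − β + (2π − ⌈ρ_β⌉(2π − β))/2^{k−⌈ρ_β⌉+1} + 2(⌈ρ_β⌉ − 1)·sin(β/2) + 2·Σ_{i=0}^{k−⌈ρ_β⌉} sin(α_{⌈ρ_β⌉}/2^{i+1}), where α_{⌈ρ_β⌉} = π − (⌈ρ_β⌉/2)(2π − β). -/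
/-- Closed formula for the cost of the Halving k-Jump Algorithm when
`k ≥ ⌈ρ_β⌉`, where `α_{⌈ρ_β⌉} = π − (⌈ρ_β⌉/2)(2π − β)`. -/
theorem stmt_18 (β : ℝ) (hβ : β ∈ Set.Ioo 0 (2 * Real.pi))
    (a e : ℕ → ℝ) (he0 : e 0 = 0)
    (ha : ∀ i : ℕ, a (i + 1) = min ((β - e i) / 2) (2 * Real.pi - β))
    (he : ∀ i : ℕ, e (i + 1) = e i + a (i + 1))
    (ρ : ℝ) (hρ : ρ = max ((2 * β - 2 * Real.pi) / (2 * Real.pi - β)) 1)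
    (k : ℕ) (hk : ⌈ρ⌉₊ ≤ k) :
    a ⌈ρ⌉₊ = Real.pi - ((⌈ρ⌉₊ : ℝ) / 2) * (2 * Real.pi - β) ∧
    1 + 2 * Real.pi - ∑ i ∈ Finset.Icc 1 k, (a i - 2 * Real.sin (a i / 2)) =
      1 + 2 * Real.pi - β
        + (2 * Real.pi - (⌈ρ⌉₊ : ℝ) * (2 * Real.pi - β)) / 2 ^ (k - ⌈ρ⌉₊ + 1)
        + 2 * ((⌈ρ⌉₊ : ℝ) - 1) * Real.sin (β / 2)
        + 2 * ∑ i ∈ Finset.range (k - ⌈ρ⌉₊ + 1),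
            Real.sin ((Real.pi - ((⌈ρ⌉₊ : ℝ) / 2) * (2 * Real.pi - β)) / 2 ^ (i + 1)) := by
  obtain ⟨hβ0, hβ2π⟩ := hβ
  have h2β : 0 < 2 * Real.pi - β := by linarith
  set m : ℕ := ⌈ρ⌉₊ with hm
  set A : ℝ := Real.pi - ((m : ℝ) / 2) * (2 * Real.pi - β) with hA
  have hρ1 : (1:ℝ) ≤ ρ := by rw [hρ]; exact le_max_right _ _
  have hm1 : 1 ≤ m := Nat.one_le_ceil_iff.mpr (by linarith)
  have hρm : ρ ≤ (m : ℝ) := Nat.le_ceil ρ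
  have hxρ : (2 * β - 2 * Real.pi) / (2 * Real.pi - β) ≤ ρ := by
    rw [hρ]; exact le_max_left _ _
  have hkey : 2 * β - 2 * Real.pi ≤ (m : ℝ) * (2 * Real.pi - β) := by
    have h := (div_le_iff₀ h2β).mp (le_trans hxρ hρm)
    linarith
  -- m * (2π - β) < 2π
  have hmlt : (m : ℝ) * (2 * Real.pi - β) < 2 * Real.pi := by
    rcases le_or_gt ρ 1 with h1 | h1
    · have hmeq : m = 1 := le_antisymm (Nat.ceil_le.mpr (by exact_mod_cast h1)) hm1
      rw [hmeq]; push_cast; linarith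
    · have hx : ρ = (2 * β - 2 * Real.pi) / (2 * Real.pi - β) := by
        rcases max_choice ((2 * β - 2 * Real.pi) / (2 * Real.pi - β)) 1 with h | h
        · rw [hρ, h]
        · exfalso; rw [hρ, h] at h1; exact absurd h1 (lt_irrefl 1)
      have hmc : (m : ℝ) < ρ + 1 := Nat.ceil_lt_add_one (by linarith)
      have := (lt_div_iff₀ h2β).mp (by rw [← hx]; linarith : (m : ℝ) - 1 < (2 * β - 2 * Real.pi) / (2 * Real.pi - β))
      nlinarith
  have hApos : 0 < A := by rw [hA]; nlinarith
  have hAle : A ≤ 2 * Real.pi - β := by rw [hA]; nlinarith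
  -- values of e below m
  have heA : ∀ j, j < m → e j = (j : ℝ) * (2 * Real.pi - β) := by
    intro j hj
    induction j with
    | zero => simpa using he0
    | succ n ih =>
      have hn : n < m := Nat.lt_of_succ_lt hj
      have hen := ih hn
      have h1 : ((n:ℕ)+1 : ℝ) < ρ := by exact_mod_cast Nat.lt_ceil.mp hj
      have hx : ((n:ℝ)+1) < (2 * β - 2 * Real.pi) / (2 * Real.pi - β) := by
        rw [hρ] at h1
        rcases lt_max_iff.mp h1 with h | h
        · exact_mod_cast h
        · exfalso; have : (0:ℝ) ≤ (n:ℝ) := Nat.cast_nonneg n; linarith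
      have hx2 : ((n:ℝ)+1) * (2 * Real.pi - β) < 2 * β - 2 * Real.pi :=
        (lt_div_iff₀ h2β).mp hx
      have han : a (n + 1) = 2 * Real.pi - β := by
        rw [ha n, hen, min_eq_right (by nlinarith)]
      rw [he n, hen, han]; push_cast; ring
  -- value of a m
  have ham : a m = A := by
    obtain ⟨n, hn⟩ : ∃ n, m = n + 1 := ⟨m - 1, by omega⟩
    have hen : e n = (n : ℝ) * (2 * Real.pi - β) := heA n (by omega)
    have hcast : ((n : ℝ)) = (m : ℝ) - 1 := by rw [hn]; push_cast; ring
    rw [hn, ha n, hen, hcast]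
    rw [min_eq_left (by nlinarith)]
    rw [hA]; ring
  -- halving regime
  have hC : ∀ j, a (m + j) = A / 2 ^ j ∧ β - e (m + j) = A / 2 ^ j := by
    intro j
    induction j with
    | zero =>
      obtain ⟨n, hn⟩ : ∃ n, m = n + 1 := ⟨m - 1, by omega⟩
      have hen : e n = (n : ℝ) * (2 * Real.pi - β) := heA n (by omega)
      have hcast : ((n : ℝ)) = (m : ℝ) - 1 := by rw [hn]; push_cast; ring
      have he2A : β - e n = 2 * A := by rw [hen, hcast, hA]; ring
      constructor
      · simpa using ham
      · have : e (m + 0) = e n + a m := by rw [Nat.add_zero, hn, he n]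
        rw [this, ham]; norm_num; linarith
    | succ j ih =>
      obtain ⟨ihA, ihE⟩ := ih
      have h1p : (1:ℝ) ≤ 2 ^ (j+1) := by
        have := pow_le_pow_right₀ (by norm_num : (1:ℝ) ≤ 2) (Nat.zero_le (j+1))
        simpa using this
      have hle : A / 2 ^ j / 2 ≤ 2 * Real.pi - β := by
        rw [div_div, ← pow_succ]
        exact le_trans (div_le_self hApos.le h1p) hAle
      have haj : a (m + j + 1) = A / 2 ^ (j+1) := by
        rw [ha (m + j), ihE, min_eq_left hle, pow_succ, ← div_div]
      have h2 : A / 2 ^ j = 2 * (A / 2 ^ (j+1)) := by rw [pow_succ]; ring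
      constructor
      · rw [show m + (j+1) = m + j + 1 from rfl, haj]
      · rw [show m + (j+1) = m + j + 1 from rfl, he (m + j), haj]
        linarith [ihE, h2]
  refine ⟨ham, ?_⟩
  -- split the sum
  have hsplit : ∑ i ∈ Finset.Icc 1 k, (a i - 2 * Real.sin (a i / 2)) =
      (∑ i ∈ Finset.Ioc 0 (m-1), (a i - 2 * Real.sin (a i / 2)))
      + ∑ i ∈ Finset.Ioc (m-1) k, (a i - 2 * Real.sin (a i / 2)) := by
    rw [Finset.sum_Ioc_consecutive _ (Nat.zero_le _) (by omega)]
    congr 1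
  -- first part
  have hval : ∀ i ∈ Finset.Ioc 0 (m-1), (a i - 2 * Real.sin (a i / 2)) =
      (2 * Real.pi - β) - 2 * Real.sin (β / 2) := by
    intro i hi
    obtain ⟨hi0, hi1⟩ := Finset.mem_Ioc.mp hi
    obtain ⟨n, hn⟩ : ∃ n, i = n + 1 := ⟨i - 1, by omega⟩
    have hen : e n = (n : ℝ) * (2 * Real.pi - β) := heA n (by omega)
    have hei : e i = (i : ℝ) * (2 * Real.pi - β) := heA i (by omega)
    have hai : a i = 2 * Real.pi - β := by
      subst hn
      have h1 := he n
      rw [hei, hen] at h1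
      push_cast at h1
      linarith
    rw [hai]
    have : (2 * Real.pi - β) / 2 = Real.pi - β / 2 := by ring
    rw [this, Real.sin_pi_sub]
  have hsum1 : ∑ i ∈ Finset.Ioc 0 (m-1), (a i - 2 * Real.sin (a i / 2)) =
      ((m:ℝ) - 1) * ((2 * Real.pi - β) - 2 * Real.sin (β / 2)) := by
    rw [Finset.sum_congr rfl hval, Finset.sum_const, Nat.card_Ioc, nsmul_eq_mul,
      Nat.sub_zero, Nat.cast_sub hm1]
    norm_num
  -- second part
  have hIoc : Finset.Ioc (m-1) k = Finset.Ico m (k+1) := by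
    ext x; simp [Finset.mem_Ioc, Finset.mem_Ico]; omega
  have hsum2 : ∑ i ∈ Finset.Ioc (m-1) k, (a i - 2 * Real.sin (a i / 2)) =
      ∑ j ∈ Finset.range (k - m + 1),
        (A / 2 ^ j - 2 * Real.sin (A / 2 ^ (j+1))) := by
    rw [hIoc, Finset.sum_Ico_eq_sum_range]
    have : k + 1 - m = k - m + 1 := by omega
    rw [this]
    refine Finset.sum_congr rfl fun j _ => ?_
    have h1 := (hC j).1
    rw [h1]
    congr 2
    rw [pow_succ]; ring
  have hgeom : ∀ n : ℕ, ∑ i ∈ Finset.range (n+1), A / 2 ^ i = 2 * A - A / 2 ^ n := by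
    intro n
    induction n with
    | zero => rw [Finset.sum_range_one]; norm_num; ring
    | succ n ih =>
      rw [Finset.sum_range_succ, ih, pow_succ]
      have h2n : (2:ℝ) ^ n ≠ 0 := by positivity
      field_simp
      ring
  have hsum2' : ∑ j ∈ Finset.range (k - m + 1),
        (A / 2 ^ j - 2 * Real.sin (A / 2 ^ (j+1))) =
      (2 * A - A / 2 ^ (k - m)) - 2 * ∑ j ∈ Finset.range (k - m + 1),
        Real.sin (A / 2 ^ (j+1)) := by
    rw [Finset.sum_sub_distrib, hgeom, Finset.mul_sum]
  rw [hsplit, hsum1, hsum2, hsum2']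
  have hAβ : ((m:ℝ) - 1) * (2 * Real.pi - β) + 2 * A = β := by rw [hA]; ring
  have h2A : 2 * Real.pi - (m : ℝ) * (2 * Real.pi - β) = 2 * A := by rw [hA]; ring
  rw [h2A, pow_succ]
  linear_combination -hAβ
end
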